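/- Let (Y, X̄, x) be a 2-critical point of (BM_n) such that for every j ∈ {1,…,k} the factor Y_j ∈ ℝ^{n_j×p_j} has linearly dependent columns (i.e., rank Y_j < p_j). Then (Y₁Y₁ᵀ,…,Y_kY_kᵀ, X_{k+1},…,X_ℓ, x) is an optimal solution of (SDP_n). -/

import Mathlib

open Matrix MeasureTheory

noncomputable section

/-- The `r`-th triangular number `τ(r) = r(r+1)/2`. -/
def tau (r : ℕ) : ℕ := r * (r + 1) / 2

/-- The space `Sⁿ` of symmetric `n × n` real matrices, as a submodule of all matrices. -/
def SymMat (n : ℕ) : Submodule ℝ (Matrix (Fin n) (Fin n) ℝ) where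
  carrier := {A | A.IsSymm}
  add_mem' := fun ha hb => ha.add hb
  zero_mem' := by simp [Matrix.IsSymm]
  smul_mem' := fun c A hA => hA.smul c

instance (n : ℕ) : MeasurableSpace (Matrix (Fin n) (Fin n) ℝ) := borel _
instance (n : ℕ) : BorelSpace (Matrix (Fin n) (Fin n) ℝ) := ⟨rfl⟩
instance (n : ℕ) : MeasurableSpace (SymMat n) := borel _
instance (n : ℕ) : BorelSpace (SymMat n) := ⟨rfl⟩

/- Block SDP setting: the PSD blocks `1, …, ℓ` are split into the `k` factored blocks,
of sizes `n₁ : Fin k → ℕ` (with factorization ranks `p : Fin k → ℕ`), and the `ℓ - k`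
unfactored blocks, of sizes `n₂ : Fin l₂ → ℕ`; there is also a free variable in `ℝ^d`.
A linear map `𝒜 : E → ℝᵐ` on `E = S^{n₁} × ⋯ × S^{n_ℓ} × ℝ^d` is represented by symmetric
matrices `A i j`, `B i j` and vectors `a i`, so that the adjoint is
`𝒜*(λ) = (Σᵢ λᵢ A i ·, Σᵢ λᵢ B i ·, Σᵢ λᵢ a i)`. -/

variable (k l₂ d m : ℕ) (n₁ : Fin k → ℕ) (n₂ : Fin l₂ → ℕ) (p : Fin k → ℕ)

/-- A point of `E`, in (matrix blocks for `j ≤ k`, matrix blocks for `j > k`, free part) form. -/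
abbrev BlockPt := ((j : Fin k) → Matrix (Fin (n₁ j)) (Fin (n₁ j)) ℝ) ×
  ((j : Fin l₂) → Matrix (Fin (n₂ j)) (Fin (n₂ j)) ℝ) × (Fin d → ℝ)

/-- The value `𝒜(X)ᵢ` of the `i`-th linear constraint at a point `X ∈ E`. -/
def constrVal (A : Fin m → (j : Fin k) → Matrix (Fin (n₁ j)) (Fin (n₁ j)) ℝ)
    (B : Fin m → (j : Fin l₂) → Matrix (Fin (n₂ j)) (Fin (n₂ j)) ℝ)
    (a : Fin m → Fin d → ℝ) (i : Fin m) (X : BlockPt k l₂ d n₁ n₂) : ℝ :=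
  ∑ j, (A i j * X.1 j).trace + ∑ j, (B i j * X.2.1 j).trace + ∑ t, a i t * X.2.2 t

/-- The objective value `⟨C, X⟩` for cost data `(C₁, C₂, c)`. -/
def objVal (C₁ : (j : Fin k) → Matrix (Fin (n₁ j)) (Fin (n₁ j)) ℝ)
    (C₂ : (j : Fin l₂) → Matrix (Fin (n₂ j)) (Fin (n₂ j)) ℝ)
    (c : Fin d → ℝ) (X : BlockPt k l₂ d n₁ n₂) : ℝ :=
  ∑ j, (C₁ j * X.1 j).trace + ∑ j, (C₂ j * X.2.1 j).trace + ∑ t, c t * X.2.2 t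

/-- The feasible set of (SDP_n): all matrix blocks PSD and `𝒜(X) = b`. -/
def FeasB (A : Fin m → (j : Fin k) → Matrix (Fin (n₁ j)) (Fin (n₁ j)) ℝ)
    (B : Fin m → (j : Fin l₂) → Matrix (Fin (n₂ j)) (Fin (n₂ j)) ℝ)
    (a : Fin m → Fin d → ℝ) (b : Fin m → ℝ) : Set (BlockPt k l₂ d n₁ n₂) :=
  {X | (∀ j, (X.1 j).PosSemidef) ∧ (∀ j, (X.2.1 j).PosSemidef) ∧
    ∀ i, constrVal k l₂ d m n₁ n₂ A B a i X = b i}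

/-- The slack component `S_j(λ) = C_j - Σᵢ λᵢ A i j` for a factored block `j ≤ k`. -/
def SlackF (C₁ : (j : Fin k) → Matrix (Fin (n₁ j)) (Fin (n₁ j)) ℝ)
    (A : Fin m → (j : Fin k) → Matrix (Fin (n₁ j)) (Fin (n₁ j)) ℝ)
    (lam : Fin m → ℝ) (j : Fin k) : Matrix (Fin (n₁ j)) (Fin (n₁ j)) ℝ :=
  C₁ j - ∑ i, lam i • A i j

/-- The slack component `S_j(λ) = C_j - Σᵢ λᵢ B i j` for an unfactored block `j > k`. -/
def SlackU (C₂ : (j : Fin l₂) → Matrix (Fin (n₂ j)) (Fin (n₂ j)) ℝ)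
    (B : Fin m → (j : Fin l₂) → Matrix (Fin (n₂ j)) (Fin (n₂ j)) ℝ)
    (lam : Fin m → ℝ) (j : Fin l₂) : Matrix (Fin (n₂ j)) (Fin (n₂ j)) ℝ :=
  C₂ j - ∑ i, lam i • B i j

/-- The free slack component `s(λ) = c - Σᵢ λᵢ a i`. -/
def slackFree (c : Fin d → ℝ) (a : Fin m → Fin d → ℝ) (lam : Fin m → ℝ) : Fin d → ℝ :=
  c - ∑ i, lam i • a i

/-- `(Y, X̄, x)` is 1st-order critical for (BM_n) with multiplier `λ`. -/
def IsCrit1B (C₁ : (j : Fin k) → Matrix (Fin (n₁ j)) (Fin (n₁ j)) ℝ)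
    (C₂ : (j : Fin l₂) → Matrix (Fin (n₂ j)) (Fin (n₂ j)) ℝ) (c : Fin d → ℝ)
    (A : Fin m → (j : Fin k) → Matrix (Fin (n₁ j)) (Fin (n₁ j)) ℝ)
    (B : Fin m → (j : Fin l₂) → Matrix (Fin (n₂ j)) (Fin (n₂ j)) ℝ)
    (a : Fin m → Fin d → ℝ) (b : Fin m → ℝ)
    (Y : (j : Fin k) → Matrix (Fin (n₁ j)) (Fin (p j)) ℝ)
    (Xbar : (j : Fin l₂) → Matrix (Fin (n₂ j)) (Fin (n₂ j)) ℝ)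
    (x : Fin d → ℝ) (lam : Fin m → ℝ) : Prop :=
  (fun j => Y j * (Y j)ᵀ, Xbar, x) ∈ FeasB k l₂ d m n₁ n₂ A B a b ∧
  slackFree d m c a lam = 0 ∧
  (∀ j, SlackF k m n₁ C₁ A lam j * Y j = 0) ∧
  (∀ j, (SlackU l₂ m n₂ C₂ B lam j).PosSemidef ∧
    (SlackU l₂ m n₂ C₂ B lam j * Xbar j).trace = 0)

/-- `(Y, X̄, x)` is 2nd-order critical for (BM_n) with multiplier `λ`. -/
def IsCrit2B (C₁ : (j : Fin k) → Matrix (Fin (n₁ j)) (Fin (n₁ j)) ℝ)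
    (C₂ : (j : Fin l₂) → Matrix (Fin (n₂ j)) (Fin (n₂ j)) ℝ) (c : Fin d → ℝ)
    (A : Fin m → (j : Fin k) → Matrix (Fin (n₁ j)) (Fin (n₁ j)) ℝ)
    (B : Fin m → (j : Fin l₂) → Matrix (Fin (n₂ j)) (Fin (n₂ j)) ℝ)
    (a : Fin m → Fin d → ℝ) (b : Fin m → ℝ)
    (Y : (j : Fin k) → Matrix (Fin (n₁ j)) (Fin (p j)) ℝ)
    (Xbar : (j : Fin l₂) → Matrix (Fin (n₂ j)) (Fin (n₂ j)) ℝ)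
    (x : Fin d → ℝ) (lam : Fin m → ℝ) : Prop :=
  IsCrit1B k l₂ d m n₁ n₂ p C₁ C₂ c A B a b Y Xbar x lam ∧
  ∀ j, ∀ U : Matrix (Fin (n₁ j)) (Fin (p j)) ℝ,
    (∀ i, (A i j * (U * (Y j)ᵀ + Y j * Uᵀ)).trace = 0) →
    0 ≤ (SlackF k m n₁ C₁ A lam j * (U * Uᵀ)).trace

/-- `X` is an optimal solution of (SDP_n). -/
def IsOptimalB (C₁ : (j : Fin k) → Matrix (Fin (n₁ j)) (Fin (n₁ j)) ℝ)
    (C₂ : (j : Fin l₂) → Matrix (Fin (n₂ j)) (Fin (n₂ j)) ℝ) (c : Fin d → ℝ)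
    (A : Fin m → (j : Fin k) → Matrix (Fin (n₁ j)) (Fin (n₁ j)) ℝ)
    (B : Fin m → (j : Fin l₂) → Matrix (Fin (n₂ j)) (Fin (n₂ j)) ℝ)
    (a : Fin m → Fin d → ℝ) (b : Fin m → ℝ)
    (X : BlockPt k l₂ d n₁ n₂) : Prop :=
  X ∈ FeasB k l₂ d m n₁ n₂ A B a b ∧
  ∀ X' ∈ FeasB k l₂ d m n₁ n₂ A B a b,
    objVal k l₂ d n₁ n₂ C₁ C₂ c X ≤ objVal k l₂ d n₁ n₂ C₁ C₂ c X'

/-- A rank tuple `r` for the unfactored blocks is attainable if some feasible point of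
(SDP_n) has `rank X_j = r j` for all unfactored blocks `j`. -/
def AttainableRanks (A : Fin m → (j : Fin k) → Matrix (Fin (n₁ j)) (Fin (n₁ j)) ℝ)
    (B : Fin m → (j : Fin l₂) → Matrix (Fin (n₂ j)) (Fin (n₂ j)) ℝ)
    (a : Fin m → Fin d → ℝ) (b : Fin m → ℝ) (r : Fin l₂ → ℕ) : Prop :=
  ∃ X ∈ FeasB k l₂ d m n₁ n₂ A B a b, ∀ j, (X.2.1 j).rank = r j

/-!
Since `rank Y_j < p_j` there is `z ≠ 0` with `Y_j z = 0`. For every `u` the direction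
`U = u zᵀ` satisfies `U Y_jᵀ = 0`, so it is tangent to the constraints, and second-order
criticality gives `0 ≤ tr(S_j(λ) U Uᵀ) = ‖z‖² uᵀ S_j(λ) u`: every slack block is positive
semidefinite. Together with `s(λ) = 0` this makes `λ` dual feasible, so the Lagrangian identity
`⟨C, Z⟩ = bᵀλ + ⟨S(λ), Z⟩` gives `bᵀλ ≤ ⟨C, Z⟩` on the feasible set, while complementary
slackness gives equality at `(Y Yᵀ, X̄, x)`.
-/

namespace Matrix

variable {n q : Type*} [Fintype n] [Fintype q]

theorem PosSemidef.trace_mul_nonneg {S X : Matrix n n ℝ} (hS : S.PosSemidef)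
    (hX : X.PosSemidef) : 0 ≤ (S * X).trace := by
  classical
  open scoped MatrixOrder in
  obtain ⟨B, rfl⟩ := CStarAlgebra.nonneg_iff_eq_star_mul_self.mp hX.nonneg
  rw [← Matrix.mul_assoc, trace_mul_comm, ← Matrix.mul_assoc]
  exact (hS.mul_mul_conjTranspose_same B).trace_nonneg

omit [Fintype n] in
theorem exists_mulVec_eq_zero_of_rank_lt {K : Type*} [Field K]
    {Y : Matrix n q K} (h : Y.rank < Fintype.card q) : ∃ z ≠ 0, Y *ᵥ z = 0 := by
  by_contra! hker
  have hinj : Function.Injective Y.mulVecLin :=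
    (injective_iff_map_eq_zero _).mpr fun z hz => by_contra fun hz0 => hker z hz0 hz
  rw [rank, LinearMap.finrank_range_of_inj hinj, Module.finrank_fintype_fun_eq_card] at h
  exact lt_irrefl _ h

theorem posSemidef_of_trace_mul_mul_transpose_nonneg {S : Matrix n n ℝ} (hS : S.IsSymm)
    {Y : Matrix n q ℝ} {z : q → ℝ} (hz : z ≠ 0) (hYz : Y *ᵥ z = 0)
    (h : ∀ U : Matrix n q ℝ, U * Yᵀ = 0 → 0 ≤ (S * (U * Uᵀ)).trace) : S.PosSemidef := by
  refine .of_dotProduct_mulVec_nonneg (isHermitian_iff_isSymm.mpr hS) fun u => ?_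
  have hU := h (vecMulVec u z) (by rw [vecMulVec_mul, vecMul_transpose, hYz, vecMulVec_zero])
  rw [transpose_vecMulVec, vecMulVec_mul_vecMulVec, vecMulVec_smul, Matrix.mul_smul, trace_smul,
    trace_mul_comm, vecMulVec_mul, trace_vecMulVec, dotProduct_comm u, ← dotProduct_mulVec] at hU
  have hzz : 0 < z ⬝ᵥ z := by simpa using dotProduct_star_self_pos_iff.mpr hz
  simpa using nonneg_of_mul_nonneg_right (by simpa [smul_eq_mul] using hU) hzz

end Matrix

section BlockSDP

variable {k l₂ d m n₁ n₂ p}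
variable {C₁ : (j : Fin k) → Matrix (Fin (n₁ j)) (Fin (n₁ j)) ℝ}
  {C₂ : (j : Fin l₂) → Matrix (Fin (n₂ j)) (Fin (n₂ j)) ℝ} {c : Fin d → ℝ}
  {A : Fin m → (j : Fin k) → Matrix (Fin (n₁ j)) (Fin (n₁ j)) ℝ}
  {B : Fin m → (j : Fin l₂) → Matrix (Fin (n₂ j)) (Fin (n₂ j)) ℝ}
  {a : Fin m → Fin d → ℝ} {b : Fin m → ℝ} {lam : Fin m → ℝ}

theorem slackF_isSymm (hC₁ : ∀ j, (C₁ j).IsSymm) (hA : ∀ i j, (A i j).IsSymm) (j : Fin k) :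
    (SlackF k m n₁ C₁ A lam j).IsSymm :=
  (SymMat _).sub_mem (hC₁ j) (Submodule.sum_mem _ fun i _ => Submodule.smul_mem _ _ (hA i j))

theorem objVal_eq_sum_mul_add_slack (lam : Fin m → ℝ) {Z : BlockPt k l₂ d n₁ n₂}
    (hZ : ∀ i, constrVal k l₂ d m n₁ n₂ A B a i Z = b i) :
    objVal k l₂ d n₁ n₂ C₁ C₂ c Z = ∑ i, lam i * b i +
      (∑ j, (SlackF k m n₁ C₁ A lam j * Z.1 j).trace +
        ∑ j, (SlackU l₂ m n₂ C₂ B lam j * Z.2.1 j).trace + slackFree d m c a lam ⬝ᵥ Z.2.2) := by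
  have hF : ∀ j, (SlackF k m n₁ C₁ A lam j * Z.1 j).trace =
      (C₁ j * Z.1 j).trace - ∑ i, lam i * (A i j * Z.1 j).trace := fun j => by
    simp [SlackF, Matrix.sub_mul, Finset.sum_mul, trace_sum]
  have hU : ∀ j, (SlackU l₂ m n₂ C₂ B lam j * Z.2.1 j).trace =
      (C₂ j * Z.2.1 j).trace - ∑ i, lam i * (B i j * Z.2.1 j).trace := fun j => by
    simp [SlackU, Matrix.sub_mul, Finset.sum_mul, trace_sum]
  have hs : slackFree d m c a lam ⬝ᵥ Z.2.2 = c ⬝ᵥ Z.2.2 - ∑ i, lam i * (a i ⬝ᵥ Z.2.2) := by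
    simp [slackFree, sub_dotProduct, sum_dotProduct]
  rw [hs]
  simp only [hF, hU, ← hZ, constrVal, objVal, dotProduct, mul_add, Finset.sum_add_distrib,
    Finset.sum_sub_distrib, Finset.mul_sum]
  rw [Finset.sum_comm (γ := Fin k), Finset.sum_comm (γ := Fin l₂)]
  ring

theorem sum_mul_le_objVal (hfree : slackFree d m c a lam = 0)
    (hF : ∀ j, (SlackF k m n₁ C₁ A lam j).PosSemidef)
    (hU : ∀ j, (SlackU l₂ m n₂ C₂ B lam j).PosSemidef)
    {Z : BlockPt k l₂ d n₁ n₂} (hZ : Z ∈ FeasB k l₂ d m n₁ n₂ A B a b) :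
    ∑ i, lam i * b i ≤ objVal k l₂ d n₁ n₂ C₁ C₂ c Z := by
  rw [objVal_eq_sum_mul_add_slack lam hZ.2.2, hfree, zero_dotProduct, add_zero,
    le_add_iff_nonneg_right]
  exact add_nonneg (Finset.sum_nonneg fun j _ => (hF j).trace_mul_nonneg (hZ.1 j))
    (Finset.sum_nonneg fun j _ => (hU j).trace_mul_nonneg (hZ.2.1 j))

theorem IsCrit1B.objVal_eq {Y : (j : Fin k) → Matrix (Fin (n₁ j)) (Fin (p j)) ℝ}
    {Xbar : (j : Fin l₂) → Matrix (Fin (n₂ j)) (Fin (n₂ j)) ℝ} {x : Fin d → ℝ}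
    (h : IsCrit1B k l₂ d m n₁ n₂ p C₁ C₂ c A B a b Y Xbar x lam) :
    objVal k l₂ d n₁ n₂ C₁ C₂ c (fun j => Y j * (Y j)ᵀ, Xbar, x) = ∑ i, lam i * b i := by
  obtain ⟨hfeas, hfree, hF, hU⟩ := h
  rw [objVal_eq_sum_mul_add_slack lam hfeas.2.2, hfree, zero_dotProduct, add_eq_left]
  simp [← Matrix.mul_assoc, hF, fun j => (hU j).2]

theorem IsCrit2B.slackF_posSemidef (hC₁ : ∀ j, (C₁ j).IsSymm) (hA : ∀ i j, (A i j).IsSymm)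
    {Y : (j : Fin k) → Matrix (Fin (n₁ j)) (Fin (p j)) ℝ}
    {Xbar : (j : Fin l₂) → Matrix (Fin (n₂ j)) (Fin (n₂ j)) ℝ} {x : Fin d → ℝ}
    (h : IsCrit2B k l₂ d m n₁ n₂ p C₁ C₂ c A B a b Y Xbar x lam) {j : Fin k}
    (hrank : (Y j).rank < p j) : (SlackF k m n₁ C₁ A lam j).PosSemidef := by
  obtain ⟨z, hz, hYz⟩ := exists_mulVec_eq_zero_of_rank_lt (Y := Y j) (by simpa using hrank)
  refine posSemidef_of_trace_mul_mul_transpose_nonneg (slackF_isSymm hC₁ hA j) hz hYz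
    fun U hU => h.2 j U fun i => ?_
  rw [← transpose_transpose (Y j), ← transpose_mul, transpose_transpose, hU]
  simp

end BlockSDP

theorem block_crit2_rank_deficient_implies_optimal_general
    (k l₂ d m : ℕ) (n₁ : Fin k → ℕ) (n₂ : Fin l₂ → ℕ) (p : Fin k → ℕ)
    (C₁ : (j : Fin k) → Matrix (Fin (n₁ j)) (Fin (n₁ j)) ℝ)
    (C₂ : (j : Fin l₂) → Matrix (Fin (n₂ j)) (Fin (n₂ j)) ℝ) (c : Fin d → ℝ)
    (hC₁ : ∀ j, (C₁ j).IsSymm)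
    (A : Fin m → (j : Fin k) → Matrix (Fin (n₁ j)) (Fin (n₁ j)) ℝ)
    (B : Fin m → (j : Fin l₂) → Matrix (Fin (n₂ j)) (Fin (n₂ j)) ℝ)
    (a : Fin m → Fin d → ℝ) (b : Fin m → ℝ)
    (hA : ∀ i j, (A i j).IsSymm)
    (Y : (j : Fin k) → Matrix (Fin (n₁ j)) (Fin (p j)) ℝ)
    (Xbar : (j : Fin l₂) → Matrix (Fin (n₂ j)) (Fin (n₂ j)) ℝ)
    (x : Fin d → ℝ)
    (hcrit : ∃ lam : Fin m → ℝ, IsCrit2B k l₂ d m n₁ n₂ p C₁ C₂ c A B a b Y Xbar x lam)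
    (hrank : ∀ j : Fin k, (Y j).rank < p j) :
    IsOptimalB k l₂ d m n₁ n₂ C₁ C₂ c A B a b (fun j => Y j * (Y j)ᵀ, Xbar, x) := by
  obtain ⟨lam, hcrit⟩ := hcrit
  have hF j := hcrit.slackF_posSemidef hC₁ hA (hrank j)
  obtain ⟨hcrit1, -⟩ := hcrit
  refine ⟨hcrit1.1, fun Z hZ => ?_⟩
  rw [hcrit1.objVal_eq]
  exact sum_mul_le_objVal hcrit1.2.1 hF (fun j => (hcrit1.2.2.2 j).1) hZ

/-- If `(Y, X̄, x)` is a 2-critical point of (BM_n) such that every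
factor `Y_j` (for `j ≤ k`) has linearly dependent columns, i.e. `rank Y_j < p_j`, then the
corresponding point `(Y₁Y₁ᵀ, …, Y_kY_kᵀ, X_{k+1}, …, X_ℓ, x)` is optimal for (SDP_n). -/
theorem block_crit2_rank_deficient_implies_optimal
    (k l₂ d m : ℕ) (n₁ : Fin k → ℕ) (n₂ : Fin l₂ → ℕ) (p : Fin k → ℕ)
    (C₁ : (j : Fin k) → Matrix (Fin (n₁ j)) (Fin (n₁ j)) ℝ)
    (C₂ : (j : Fin l₂) → Matrix (Fin (n₂ j)) (Fin (n₂ j)) ℝ) (c : Fin d → ℝ)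
    (hC₁ : ∀ j, (C₁ j).IsSymm) (hC₂ : ∀ j, (C₂ j).IsSymm)
    (A : Fin m → (j : Fin k) → Matrix (Fin (n₁ j)) (Fin (n₁ j)) ℝ)
    (B : Fin m → (j : Fin l₂) → Matrix (Fin (n₂ j)) (Fin (n₂ j)) ℝ)
    (a : Fin m → Fin d → ℝ) (b : Fin m → ℝ)
    (hA : ∀ i j, (A i j).IsSymm) (hB : ∀ i j, (B i j).IsSymm)
    (Y : (j : Fin k) → Matrix (Fin (n₁ j)) (Fin (p j)) ℝ)
    (Xbar : (j : Fin l₂) → Matrix (Fin (n₂ j)) (Fin (n₂ j)) ℝ)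
    (x : Fin d → ℝ)
    (hcrit : ∃ lam : Fin m → ℝ, IsCrit2B k l₂ d m n₁ n₂ p C₁ C₂ c A B a b Y Xbar x lam)
    (hrank : ∀ j : Fin k, (Y j).rank < p j) :
    IsOptimalB k l₂ d m n₁ n₂ C₁ C₂ c A B a b (fun j => Y j * (Y j)ᵀ, Xbar, x) :=
  block_crit2_rank_deficient_implies_optimal_general k l₂ d m n₁ n₂ p C₁ C₂ c hC₁ A B a b hA Y Xbar
    x hcrit hrank
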